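/- Let P ∈ F_2[x_1,…,x_n] be a polynomial of total degree at most d, and let M be the 2^n × 2^n matrix over F_2 with rows and columns indexed by F_2^n whose entries are M_{x,y} = P(x + y). Then rank(M) ≤ 2·C(n, ≤ ⌊d/2⌋). -/

import Mathlib

/-!
Over `𝔽₂` every power `xᵢ ^ e` with `e ≥ 1` may be replaced by `xᵢ`, so `P (x + y)` is a sum of
terms `c_S ∏_{i ∈ S} (xᵢ + yᵢ)` with `#S ≤ d`, that is, of terms `c_S x^T y^(S \ T)` with `T ⊆ S`.
Since `#S ≤ d`, either `#T ≤ d / 2` or `#(S \ T) ≤ d / 2`. Grouping the terms of the first kind by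
`T` and those of the second kind by `S \ T` writes `M` as a sum of two matrices, each of which
factors through the family of subsets of `Fin n` of size at most `d / 2`.
-/

open Finset MvPolynomial

namespace Matrix

variable {ι κ m n K : Type*} [Fintype n]

theorem rank_add_le [Field K] (A B : Matrix m n K) : (A + B).rank ≤ A.rank + B.rank := by
  unfold rank
  rw [mulVecLin_add]
  exact (Submodule.finrank_mono (LinearMap.range_add_le _ _)).trans
    (Submodule.finrank_add_le_finrank_add_finrank _ _)

theorem rank_of_sum_mul_le [CommRing K] [StrongRankCondition K] (J : Finset ι) (s : Finset κ)
    (key : ι → κ) (hkey : ∀ j ∈ J, key j ∈ s) (f : κ → m → K) (g : ι → n → K) :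
    (of fun x y => ∑ j ∈ J, f (key j) x * g j y).rank ≤ #s := by
  classical
  have hfactor : (of fun x y => ∑ j ∈ J, f (key j) x * g j y) =
      of (fun x (t : s) => f t x) * of (fun (t : s) y => ∑ j ∈ J with key j = t, g j y) := by
    ext x y
    simp only [of_apply, mul_apply, mul_sum]
    rw [← sum_fiberwise_of_maps_to hkey, ← sum_coe_sort s]
    refine sum_congr rfl fun t _ => sum_congr rfl fun j hj => ?_
    rw [(mem_filter.1 hj).2]
  rw [hfactor]
  exact (rank_mul_le_right _ _).trans ((rank_le_card_height _).trans_eq (Fintype.card_coe s))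

theorem rank_of_sum_mul_le' [Fintype m] [Field K] (J : Finset ι) (s : Finset κ) (key : ι → κ)
    (hkey : ∀ j ∈ J, key j ∈ s) (g : ι → m → K) (f : κ → n → K) :
    (of fun x y => ∑ j ∈ J, g j x * f (key j) y).rank ≤ #s := by
  have htranspose : (of fun x y => ∑ j ∈ J, g j x * f (key j) y)ᵀ =
      of fun y x => ∑ j ∈ J, f (key j) y * g j x := by
    ext y x
    exact sum_congr rfl fun j _ => mul_comm _ _
  rw [← rank_transpose, htranspose]
  exact rank_of_sum_mul_le J s key hkey f g

end Matrix

theorem card_filter_card_le_eq_sum_choose (α : Type*) [Fintype α] (k : ℕ) :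
    #{T : Finset α | #T ≤ k} = ∑ i ∈ range (k + 1), (Fintype.card α).choose i := by
  classical
  rw [card_eq_sum_card_fiberwise (f := card) (t := range (k + 1))
    (fun T hT => mem_range.2 (Nat.lt_succ_of_le (mem_filter.1 hT).2))]
  refine sum_congr rfl fun i hi => ?_
  rw [filter_filter, ← card_univ, ← card_powersetCard, ← powerset_univ]
  congr 1
  ext T
  simp only [mem_filter, mem_powerset, mem_powersetCard, subset_univ, true_and]
  have := mem_range.1 hi
  omega

theorem ZMod.isIdempotentElem_two (a : ZMod 2) : IsIdempotentElem a := by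
  fin_cases a <;> rfl

theorem MvPolynomial.eval_eq_sum_prod_support {σ R : Type*} [CommSemiring R]
    (hR : ∀ a : R, IsIdempotentElem a) (z : σ → R) (P : MvPolynomial σ R) :
    eval z P = ∑ μ ∈ P.support, coeff μ P * ∏ i ∈ μ.support, z i := by
  rw [eval_eq]
  refine sum_congr rfl fun μ _ => congrArg _ (prod_congr rfl fun i hi => ?_)
  exact (hR _).pow_eq (Finsupp.mem_support_iff.1 hi)

theorem MvPolynomial.eval_add_eq_sum_sigma {σ R : Type*} [DecidableEq σ] [CommSemiring R]
    (hR : ∀ a : R, IsIdempotentElem a) (x y : σ → R) (P : MvPolynomial σ R) :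
    eval (x + y) P = ∑ j ∈ P.support.sigma fun μ => μ.support.powerset,
      (coeff j.1 P * ∏ i ∈ j.2, x i) * ∏ i ∈ j.1.support \ j.2, y i := by
  rw [eval_eq_sum_prod_support hR, sum_sigma]
  refine sum_congr rfl fun μ _ => ?_
  simp only [Pi.add_apply, prod_add, mul_sum, mul_assoc]

theorem MvPolynomial.card_support_le_totalDegree {σ R : Type*} [CommSemiring R]
    {P : MvPolynomial σ R} {μ : σ →₀ ℕ} (hμ : μ ∈ P.support) : #μ.support ≤ P.totalDegree := by
  refine le_trans ?_ (le_totalDegree hμ)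
  rw [card_eq_sum_ones]
  exact sum_le_sum fun i hi => Nat.one_le_iff_ne_zero.2 (Finsupp.mem_support_iff.1 hi)

/-- The Croot–Lev–Pach lemma over `𝔽₂`: if `P` is a polynomial in `n` variables over
`𝔽₂` of total degree at most `d` and `M` is the `2ⁿ × 2ⁿ` matrix with entries
`M x y = P(x + y)`, then `rank M ≤ 2 · C(n, ≤ ⌊d/2⌋)`. -/
theorem croot_lev_pach_F2 (n d : ℕ)
    (P : MvPolynomial (Fin n) (ZMod 2)) (hP : P.totalDegree ≤ d)
    (M : Matrix (Fin n → ZMod 2) (Fin n → ZMod 2) (ZMod 2))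
    (hM : ∀ x y, M x y = MvPolynomial.eval (x + y) P) :
    M.rank ≤ 2 * ∑ i ∈ Finset.range (d / 2 + 1), n.choose i := by
  classical
  set J := P.support.sigma fun μ => μ.support.powerset
  set B : Finset (Finset (Fin n)) := {T | #T ≤ d / 2}
  have hsplit : M =
      (Matrix.of fun x y => ∑ j ∈ J with #j.2 ≤ d / 2,
        (∏ i ∈ j.2, x i) * (coeff j.1 P * ∏ i ∈ j.1.support \ j.2, y i)) +
      Matrix.of fun x y => ∑ j ∈ J with ¬#j.2 ≤ d / 2,
        (coeff j.1 P * ∏ i ∈ j.2, x i) * ∏ i ∈ j.1.support \ j.2, y i := by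
    ext x y
    rw [hM, eval_add_eq_sum_sigma ZMod.isIdempotentElem_two,
      ← sum_filter_add_sum_filter_not J (#·.2 ≤ d / 2)]
    simp only [Matrix.add_apply, Matrix.of_apply]
    exact congrArg (· + _) (sum_congr rfl fun _ _ => by ring)
  have hlow : ∀ j ∈ J.filter (#·.2 ≤ d / 2), j.2 ∈ B := fun j hj => by
    simpa [B] using (mem_filter.1 hj).2
  have hhigh : ∀ j ∈ J.filter (¬#·.2 ≤ d / 2), j.1.support \ j.2 ∈ B := fun j hj => by
    obtain ⟨hjJ, hT⟩ := mem_filter.1 hj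
    obtain ⟨hμ, hTμ⟩ := mem_sigma.1 hjJ
    have hdeg := (card_support_le_totalDegree hμ).trans hP
    have := card_sdiff_add_card_eq_card (mem_powerset.1 hTμ)
    simp only [B, mem_filter, mem_univ, true_and]
    omega
  calc M.rank ≤ #B + #B := hsplit ▸ (Matrix.rank_add_le _ _).trans (add_le_add
        (Matrix.rank_of_sum_mul_le _ B _ hlow _ _) (Matrix.rank_of_sum_mul_le' _ B _ hhigh _ _))
    _ = 2 * ∑ i ∈ range (d / 2 + 1), n.choose i := by
      rw [card_filter_card_le_eq_sum_choose, Fintype.card_fin, two_mul]
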